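/- Let β be a Boolean combination of atomic propositions over trace variables π₁,…,π_k. For any traces t₁,…,t_k, the assignment [πᵢ ↦ tᵢ] satisfies Fβ if and only if there exists a tuple (v₁,…,v_k) in the finite set V(t₁,…,t_k) = {(t₁(j),…,t_k(j)) | j ∈ ℕ} such that β is satisfied when each aᵢ_{πᵢ} is evaluated as a ∈ vᵢ. Consequently, satisfaction of any Boolean combination of formulas Fβ by [πᵢ ↦ tᵢ] depends only on V(t₁,…,t_k). -/

import Mathlib

/-- Boolean combinations of atomic propositions `a_π`. -/
inductive BC (α V : Type*)
  | atom : α → V → BC α V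
  | neg : BC α V → BC α V
  | or : BC α V → BC α V → BC α V

/-- Evaluation of a Boolean combination at a tuple of valuations. -/
def BC.eval {α V : Type*} (v : V → Set α) : BC α V → Prop
  | atom a π => a ∈ v π
  | neg β => ¬ β.eval v
  | or β γ => β.eval v ∨ γ.eval v

/-- Boolean combinations of formulas `F β`. -/
inductive FBC (α V : Type*)
  | f : BC α V → FBC α V
  | neg : FBC α V → FBC α V
  | or : FBC α V → FBC α V → FBC α V

/-- Satisfaction of a Boolean combination of `F β` formulas by a trace
assignment. -/
def FBC.sat {α V : Type*} (t : V → ℕ → Set α) : FBC α V → Prop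
  | f β => ∃ j : ℕ, β.eval (fun π => t π j)
  | neg φ => ¬ φ.sat t
  | or φ ψ => φ.sat t ∨ ψ.sat t

/-- The set `V(t₁,…,t_k)` of tuples of valuations occurring along the traces. -/
def valSet {α V : Type*} (t : V → ℕ → Set α) : Set (V → Set α) :=
  Set.range fun j => fun π => t π j

theorem FBC.sat_f_iff_exists_mem_valSet {α V : Type*} (β : BC α V) (t : V → ℕ → Set α) :
    (FBC.f β).sat t ↔ ∃ v ∈ valSet t, β.eval v := by
  rw [valSet, Set.exists_range_iff, sat]

theorem FBC.sat_congr_of_valSet_eq {α V : Type*} {t t' : V → ℕ → Set α}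
    (h : valSet t = valSet t') (φ : FBC α V) : φ.sat t ↔ φ.sat t' := by
  induction φ with
  | f β => rw [sat_f_iff_exists_mem_valSet, sat_f_iff_exists_mem_valSet, h]
  | neg φ ih => exact not_congr ih
  | or φ ψ ihφ ihψ => exact or_congr ihφ ihψ

theorem f_sat_iff_valSet {α V : Type*} :
    (∀ (β : BC α V) (t : V → ℕ → Set α),
      (FBC.f β).sat t ↔ ∃ v ∈ valSet t, β.eval v) ∧
    (∀ (φ : FBC α V) (t t' : V → ℕ → Set α),
      valSet t = valSet t' → (φ.sat t ↔ φ.sat t')) :=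
  ⟨FBC.sat_f_iff_exists_mem_valSet, fun φ _ _ h => FBC.sat_congr_of_valSet_eq h φ⟩
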